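/- arXiv:math/0509603 — 4 statements merged into one kernel-verified Lean document; each statement's English description precedes it below -/
import Mathlib

section
/- For every irrational x in (0,1) with continued fraction expansion [a_1, a_2, ...] and every k ≥ 0, the denominator q_k of the k-th convergent satisfies q_k ≤ γ^{τ_k} ρ^{τ_k - k - 1}, where τ_k = a_1 + ... + a_k (with τ_0 = 0), γ = (1+√5)/2, and ρ = 1 - γ^{-6}. -/
/-!
Put `c = φρ` (`rate` below) and `Q_k = q_k ρ^(k+1)`; the claim is `Q_k ≤ c^τ_k`. The recurrence becomes
`Q_(k+1) = a ρ Q_k + ρ² Q_(k-1)` with `a = a_(k+1)`, and from `k = 1` on the triple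
`(Q_k, Q_(k-1), c^τ_k)` satisfies three linear inequalities that every step preserves.
A step with `a = 1` multiplies the left side of the second one, `φ Q_k + ρ Q_(k-1) ≤ φ c^τ_k`,
by exactly `c` (as `c² = cρ + ρ²`), and the third one is what bounds `Q_(k+1)` after such a step. For `a ≥ 2`
Bernoulli's inequality `c^a ≥ c² (1 + (a - 2)(c - 1))` reduces everything to numerical estimates,
using `ρ = (8φ + 4) / (8φ + 5)`.
-/

open Finset
open scoped goldenRatio

namespace GoldenDenominators

noncomputable def rho : ℝ := 1 - φ ^ (-6 : ℤ)

noncomputable def rate : ℝ := φ * rho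

lemma goldenRatio_bounds : 1.618 < φ ∧ φ < 1.6181 := by
  have h5 : √5 ^ 2 = 5 := Real.sq_sqrt (by norm_num)
  have h0 : 0 ≤ √5 := Real.sqrt_nonneg 5
  constructor <;> (unfold Real.goldenRatio; nlinarith)

lemma rho_mul_eight_goldenRatio_add_five : rho * (8 * φ + 5) = 8 * φ + 4 := by
  have h6 : φ ^ 6 = 8 * φ + 5 := by
    linear_combination (φ ^ 4 + φ ^ 3 + 2 * φ ^ 2 + 3 * φ + 5) * Real.goldenRatio_sq
  have hpos : 0 < 8 * φ + 5 := by linarith [Real.goldenRatio_pos]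
  rw [rho, zpow_neg, zpow_ofNat, h6]
  field_simp
  ring

lemma rho_bounds : 0.9442 < rho ∧ rho < 0.9443 := by
  obtain ⟨h1, h2⟩ := goldenRatio_bounds
  have := rho_mul_eight_goldenRatio_add_five
  constructor <;> nlinarith

lemma rate_bounds : 1.5277 < rate ∧ rate < 1.528 := by
  obtain ⟨h1, h2⟩ := goldenRatio_bounds
  obtain ⟨h3, h4⟩ := rho_bounds
  constructor <;> (rw [rate]; nlinarith)

lemma rho_pos : 0 < rho := by linarith [rho_bounds.1]

lemma rate_pos : 0 < rate := by linarith [rate_bounds.1]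

lemma rate_sq_mul_le_pow {n : ℕ} (hn : 2 ≤ n) :
    rate ^ 2 * (1 + (n - 2 : ℝ) * (rate - 1)) ≤ rate ^ n := by
  obtain ⟨m, rfl⟩ := Nat.exists_eq_add_of_le hn
  have bernoulli := one_add_mul_le_pow (a := rate - 1) (by linarith [rate_bounds.1]) m
  rw [add_sub_cancel] at bernoulli
  push_cast
  rw [add_sub_cancel_left, pow_add]
  exact mul_le_mul_of_nonneg_left bernoulli (sq_nonneg _)

/-- Read with `Q = q_k ρ^(k+1)`, `Q' = q_(k-1) ρ^k` and `X = rate ^ τ_k`. -/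
def DenomInv (Q Q' X : ℝ) : Prop :=
  Q ≤ 4 / 5 * X ∧ φ * Q + rho * Q' ≤ φ * X ∧ Q + rho * Q' ≤ 4 / 5 * φ * X

namespace DenomInv

variable {Q Q' X : ℝ}

lemma step_one (h : DenomInv Q Q' X) : DenomInv (rho * Q + rho ^ 2 * Q') Q (X * rate) := by
  obtain ⟨hA, hB, hD⟩ := h
  have hρ := rho_pos.le
  have hφ := Real.goldenRatio_sq
  unfold rate
  refine ⟨?_, ?_, ?_⟩
  · linear_combination rho * hD
  · linear_combination φ * rho * hB - rho * Q * hφ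
  · linear_combination rho * (hA + hD) - 4 / 5 * rho * X * hφ

lemma step_of_two_le (h : DenomInv Q Q' X) (hX : 0 ≤ X) {n : ℕ} (hn : 2 ≤ n) :
    DenomInv (n * rho * Q + rho ^ 2 * Q') Q (X * rate ^ n) := by
  obtain ⟨hA, hB, -⟩ := h
  obtain ⟨hφ₁, hφ₂⟩ := goldenRatio_bounds
  obtain ⟨hρ₁, hρ₂⟩ := rho_bounds
  obtain ⟨hc₁, hc₂⟩ := rate_bounds
  have hn' : (2 : ℝ) ≤ n := by exact_mod_cast hn
  have hpow := rate_sq_mul_le_pow hn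
  have hslope := mul_nonneg (sub_nonneg.2 hn') (sub_nonneg.2 hc₁.le)
  have hφpow := mul_le_mul_of_nonneg_right hφ₁.le (pow_nonneg rate_pos.le n)
  have hB' : rate * Q + rho ^ 2 * Q' ≤ rate * X := by
    rw [rate]; nlinarith [mul_le_mul_of_nonneg_left hB rho_pos.le]
  refine ⟨?_, ?_, ?_⟩
  · have num : (n * rho - rate) * (4 / 5) + rate ≤ 4 / 5 * rate ^ n := by nlinarith
    have hcoef : 0 ≤ n * rho - rate := by nlinarith
    nlinarith [mul_le_mul_of_nonneg_left num hX, mul_le_mul_of_nonneg_left hA hcoef]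
  · have num : rate * (n - 1) * (4 / 5) + φ * rate ≤ φ * rate ^ n := by
      nlinarith
    have hcoef : φ * n * rho + rho - φ * rate = rate * (n - 1) := by
      unfold rate; linear_combination - rho * Real.goldenRatio_sq
    have hcoef' : 0 ≤ rate * (n - 1) := by nlinarith
    nlinarith [mul_le_mul_of_nonneg_left num hX, mul_le_mul_of_nonneg_left hA hcoef',
      mul_le_mul_of_nonneg_left hB' (by linarith : (0 : ℝ) ≤ φ)]
  · have num : ((n + 1) * rho - rate) * (4 / 5) + rate ≤ 4 / 5 * φ * rate ^ n := by nlinarith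
    have hcoef : 0 ≤ (n + 1) * rho - rate := by nlinarith
    nlinarith [mul_le_mul_of_nonneg_left num hX, mul_le_mul_of_nonneg_left hA hcoef]

lemma step (h : DenomInv Q Q' X) (hX : 0 ≤ X) {n : ℕ} (hn : 1 ≤ n) :
    DenomInv (n * rho * Q + rho ^ 2 * Q') Q (X * rate ^ n) := by
  rcases hn.eq_or_lt with rfl | hn
  · simpa using h.step_one
  · exact h.step_of_two_le hX hn

end DenomInv

lemma denomInv_start {n : ℕ} (hn : 1 ≤ n) : DenomInv (n * rho ^ 2) rho (rate ^ n) := by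
  obtain ⟨hφ₁, hφ₂⟩ := goldenRatio_bounds
  obtain ⟨hρ₁, hρ₂⟩ := rho_bounds
  obtain ⟨hc₁, hc₂⟩ := rate_bounds
  have hφ := Real.goldenRatio_sq
  rcases hn.eq_or_lt with rfl | hn
  · simp only [Nat.cast_one, one_mul, pow_one]
    unfold rate at *
    refine ⟨by nlinarith, by nlinarith, by nlinarith⟩
  · have hn' : (2 : ℝ) ≤ n := by exact_mod_cast hn
    have hpow := rate_sq_mul_le_pow hn
    have hslope : 0 ≤ (n - 2) * (rate - 1) := mul_nonneg (by linarith) (by linarith)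
    have hρsq : rho ^ 2 < 0.8918 := by nlinarith
    have hcsq : 2.3338 < rate ^ 2 := by nlinarith
    have hlin : 2.3338 + 1.2315 * (n - 2) ≤ rate ^ n := by nlinarith
    refine ⟨by nlinarith, ?_, by nlinarith⟩
    -- at `n = 2` this conjunct is an equality, so `rate ^ 2` is used exactly
    have hsq : rate ^ 2 * φ = (2 * φ + 1) * rho ^ 2 := by
      unfold rate; linear_combination (φ + 1) * rho ^ 2 * hφ
    have hφpow := mul_le_mul_of_nonneg_left hpow (by linarith : (0 : ℝ) ≤ φ)
    have : 0 ≤ (n - 2) * rho ^ 2 * ((rate - 1) * (2 * φ + 1) - φ) :=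
      mul_nonneg (mul_nonneg (by linarith) (sq_nonneg _)) (by nlinarith)
    nlinarith

lemma denomInv_of_recurrence {a q : ℕ → ℕ} (ha : ∀ i, 1 ≤ i → 1 ≤ a i) (hq0 : q 0 = 1)
    (hq1 : q 1 = a 1) (hqrec : ∀ k, 1 ≤ k → q (k + 1) = a (k + 1) * q k + q (k - 1))
    {k : ℕ} (hk : 1 ≤ k) :
    DenomInv (q k * rho ^ (k + 1)) (q (k - 1) * rho ^ k) (rate ^ ∑ i ∈ Icc 1 k, a i) := by
  induction k, hk using Nat.le_induction with
  | base => simpa [hq0, hq1] using denomInv_start (ha 1 le_rfl)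
  | succ k hk ih =>
    have hq : (q (k + 1) : ℝ) * rho ^ (k + 1 + 1) =
        a (k + 1) * rho * (q k * rho ^ (k + 1)) + rho ^ 2 * (q (k - 1) * rho ^ k) := by
      rw [hqrec k hk]; push_cast; ring
    rw [hq, sum_Icc_succ_top (by omega), pow_add rate, Nat.add_sub_cancel]
    exact ih.step (pow_nonneg rate_pos.le _) (ha (k + 1) (by omega))

lemma denom_mul_rho_pow_le {a q : ℕ → ℕ} (ha : ∀ i, 1 ≤ i → 1 ≤ a i) (hq0 : q 0 = 1)
    (hq1 : q 1 = a 1) (hqrec : ∀ k, 1 ≤ k → q (k + 1) = a (k + 1) * q k + q (k - 1))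
    (k : ℕ) : q k * rho ^ (k + 1) ≤ rate ^ ∑ i ∈ Icc 1 k, a i := by
  rcases Nat.eq_zero_or_pos k with rfl | hk
  · simpa [hq0] using rho_bounds.2.le.trans (by norm_num)
  · have hX : 0 ≤ rate ^ ∑ i ∈ Icc 1 k, a i := pow_nonneg rate_pos.le _
    linarith [(denomInv_of_recurrence ha hq0 hq1 hqrec hk).1]

end GoldenDenominators

open GoldenDenominators

/-- For a continued fraction expansion `[a 1, a 2, ...]` with all partial quotients
positive, with convergent denominators `q 0 = 1`, `q 1 = a 1`,
`q (k+1) = a (k+1) * q k + q (k-1)`, and `τ k = a 1 + ... + a k`, one has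
`q k ≤ γ ^ (τ k) * ρ ^ (τ k - k - 1)`, where `γ = (1+√5)/2` and `ρ = 1 - γ⁻⁶`. -/
theorem denom_le_golden_pow (a q : ℕ → ℕ) (ha : ∀ i, 1 ≤ i → 1 ≤ a i)
    (hq0 : q 0 = 1) (hq1 : q 1 = a 1)
    (hqrec : ∀ k, 1 ≤ k → q (k + 1) = a (k + 1) * q k + q (k - 1)) :
    ∀ k : ℕ, (q k : ℝ) ≤
      ((1 + Real.sqrt 5) / 2) ^ ((∑ i ∈ Icc 1 k, a i : ℕ) : ℝ) *
        (1 - ((1 + Real.sqrt 5) / 2) ^ (-6 : ℤ)) ^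
          (((∑ i ∈ Icc 1 k, a i : ℕ) : ℝ) - k - 1) := by
  intro k
  set T := ∑ i ∈ Icc 1 k, a i
  change (q k : ℝ) ≤ φ ^ (T : ℝ) * rho ^ ((T : ℝ) - k - 1)
  have hexp : (T : ℝ) - k - 1 = T - (k + 1 : ℕ) := by push_cast; ring
  rw [hexp, Real.rpow_sub rho_pos, Real.rpow_natCast, Real.rpow_natCast, Real.rpow_natCast,
    mul_div_assoc', le_div_iff₀ (pow_pos rho_pos _), ← mul_pow]
  exact denom_mul_rho_pow_le ha hq0 hq1 hqrec k
end

section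
/- For every n ≥ 2, the set of rationals in the Stern–Brocot sequence of level n−1 that are not in level n−2, i.e. 𝔗_{n-1} \ 𝔗_{n-2}, has cardinality 2^{n-2}, and equals the set of finite continued fractions [a_1,...,a_k] where (a_1,...,a_k) ranges over all tuples of positive integers with a_1+...+a_k = n and a_k ≥ 2. -/
/-- Stern–Brocot numerators. -/
def sbS : ℕ → ℕ → ℕ
  | 0, k => if k ≤ 1 then 0 else 1
  | n + 1, k =>
    if k % 2 = 1 then sbS n ((k + 1) / 2) else sbS n (k / 2) + sbS n (k / 2 + 1)

/-- Stern–Brocot denominators. -/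
def sbT : ℕ → ℕ → ℕ
  | 0, _ => 1
  | n + 1, k =>
    if k % 2 = 1 then sbT n ((k + 1) / 2) else sbT n (k / 2) + sbT n (k / 2 + 1)

/-- The `n`-th Stern–Brocot sequence, as a set of real numbers. -/
def sbSeq (n : ℕ) : Set ℝ :=
  {x | ∃ k ∈ Finset.Icc 1 (2 ^ n + 1), x = (sbS n k : ℝ) / sbT n k}

/-- The value of a finite continued fraction `[a_1, ..., a_k] = 1/(a_1 + 1/(a_2 + ...))`. -/
noncomputable def cfVal : List ℕ → ℝ
  | [] => 0
  | a :: t => 1 / (a + cfVal t)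

/-! Consecutive entries `p, q` of a Stern–Brocot level satisfy `q.1 * p.2 = p.1 * q.2 + 1`, so
each level `n` consists of `2 ^ n + 1` distinct values. Passing to the next level inserts mediants,
and by induction consecutive entries of level `n` are the numerator–denominator pairs of `[w]` and
`[w, a]` for a composition `w ++ [a]` of `n + 1`; since `[.., a, 1] = [.., a + 1]`, every entry is
`0`, `1`, or a continued fraction with last quotient `≥ 2` and quotient sum at most `n + 1`.
Each of those with quotient sum `s + 2` arises from a composition of `s + 1` by incrementing its
last part, so there are at most `2 ^ s` of them. Comparing cardinalities, level `n` is exactly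
`{0, 1}` together with these continued fractions of sum `≤ n + 1`, and the new entries of level
`n + 1` are those of sum `n + 2`.
-/

namespace SternBrocot

def sbPair (n k : ℕ) : ℕ × ℕ := (sbS n k, sbT n k)

noncomputable def ratio (p : ℕ × ℕ) : ℝ := p.1 / p.2

lemma sbPair_succ_odd (n j : ℕ) : sbPair (n + 1) (2 * j + 1) = sbPair n (j + 1) := by
  simp [sbPair, sbS, sbT, Nat.add_mod, Nat.add_div]

lemma sbPair_succ_even (n j : ℕ) :
    sbPair (n + 1) (2 * j + 2) = sbPair n (j + 1) + sbPair n (j + 2) := by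
  have hmod : (2 * j + 2) % 2 = 0 := by omega
  have hdiv : (2 * j + 2) / 2 = j + 1 := by omega
  simp [sbPair, sbS, sbT, hmod, hdiv]

lemma sbPair_consecutive_induction (P : ℕ → ℕ × ℕ → ℕ × ℕ → Prop)
    (h0 : P 0 (0, 1) (1, 1))
    (hstep : ∀ m p q, P m p q → P (m + 1) p (p + q) ∧ P (m + 1) (p + q) q) :
    ∀ m k, 1 ≤ k → k ≤ 2 ^ m → P m (sbPair m k) (sbPair m (k + 1)) := by
  intro m
  induction m with
  | zero =>
    intro k hk1 hk2
    obtain rfl : k = 1 := by rw [pow_zero] at hk2; omega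
    exact h0
  | succ m ih =>
    intro k hk1 hk2
    obtain ⟨j, rfl | rfl⟩ : ∃ j, k = 2 * j + 1 ∨ k = 2 * j + 2 := ⟨(k - 1) / 2, by omega⟩
    · have := (hstep _ _ _ (ih (j + 1) (by omega) (by rw [pow_succ] at hk2; omega))).1
      rwa [sbPair_succ_odd, sbPair_succ_even]
    · have := (hstep _ _ _ (ih (j + 1) (by omega) (by rw [pow_succ] at hk2; omega))).2
      rwa [sbPair_succ_even, show 2 * j + 2 + 1 = 2 * (j + 1) + 1 by ring, sbPair_succ_odd]

def IsFareyPair (p q : ℕ × ℕ) : Prop := q.1 * p.2 = p.1 * q.2 + 1 ∧ 0 < p.2 ∧ 0 < q.2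

lemma IsFareyPair.mediant {p q : ℕ × ℕ} (h : IsFareyPair p q) :
    IsFareyPair p (p + q) ∧ IsFareyPair (p + q) q := by
  obtain ⟨hdet, hp, hq⟩ := h
  simp only [IsFareyPair, Prod.fst_add, Prod.snd_add]
  refine ⟨⟨?_, hp, by omega⟩, ⟨?_, by omega, hq⟩⟩ <;> linear_combination hdet

lemma IsFareyPair.ratio_lt {p q : ℕ × ℕ} (h : IsFareyPair p q) : ratio p < ratio q := by
  obtain ⟨hdet, hp, hq⟩ := h
  rw [ratio, ratio, div_lt_div_iff₀ (by exact_mod_cast hp) (by exact_mod_cast hq)]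
  exact_mod_cast (by omega : p.1 * q.2 < q.1 * p.2)

lemma sbPair_isFareyPair : ∀ m k, 1 ≤ k → k ≤ 2 ^ m →
    IsFareyPair (sbPair m k) (sbPair m (k + 1)) :=
  sbPair_consecutive_induction (fun _ => IsFareyPair) (by simp [IsFareyPair])
    fun _ _ _ h => h.mediant

lemma sbSeq_eq_image (n : ℕ) :
    sbSeq n = (fun k => ratio (sbPair n k)) '' Set.Icc 1 (2 ^ n + 1) := by
  ext x
  simp [sbSeq, ratio, sbPair, eq_comm]

lemma strictMonoOn_ratio_sbPair (n : ℕ) :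
    StrictMonoOn (fun k => ratio (sbPair n k)) (Set.Icc 1 (2 ^ n + 1)) :=
  strictMonoOn_of_lt_add_one Set.ordConnected_Icc fun k _ hk hk1 =>
    (sbPair_isFareyPair n k hk.1 (Nat.le_of_add_le_add_right hk1.2)).ratio_lt

lemma sbSeq_ncard (n : ℕ) : (sbSeq n).ncard = 2 ^ n + 1 := by
  rw [sbSeq_eq_image, (strictMonoOn_ratio_sbPair n).injOn.ncard_image,
    Set.ncard_eq_toFinset_card', Set.toFinset_Icc, Nat.card_Icc, Nat.add_sub_cancel]

lemma sbSeq_finite (n : ℕ) : (sbSeq n).Finite := by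
  rw [sbSeq_eq_image]
  exact (Set.finite_Icc _ _).image _

def cfNumDen : List ℕ → ℕ × ℕ
  | [] => (0, 1)
  | a :: t => ((cfNumDen t).2, a * (cfNumDen t).2 + (cfNumDen t).1)

lemma cfNumDen_append (w s : List ℕ) :
    cfNumDen (w ++ s) = (cfNumDen s).1 • cfNumDen (w ++ [0]) + (cfNumDen s).2 • cfNumDen w := by
  induction w with
  | nil => simp [cfNumDen]
  | cons a w ih =>
    ext <;> simp only [List.cons_append, cfNumDen, ih, Prod.smul_fst, Prod.smul_snd,
      Prod.fst_add, Prod.snd_add, smul_eq_mul]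
    ring

lemma cfNumDen_append_succ (w : List ℕ) (a : ℕ) :
    cfNumDen (w ++ [a + 1]) = cfNumDen w + cfNumDen (w ++ [a]) := by
  rw [cfNumDen_append, cfNumDen_append w [a]]
  simp only [cfNumDen, mul_one, add_zero, one_smul, add_smul]
  abel

lemma cfNumDen_append_one (w : List ℕ) (a : ℕ) :
    cfNumDen (w ++ [a] ++ [1]) = cfNumDen (w ++ [a + 1]) := by
  rw [List.append_assoc, cfNumDen_append, cfNumDen_append w [a + 1]]
  simp [cfNumDen]

lemma cfNumDen_snd_pos {l : List ℕ} (hl : ∀ a ∈ l, 1 ≤ a) : 0 < (cfNumDen l).2 := by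
  induction l with
  | nil => simp [cfNumDen]
  | cons a t ih =>
    simp only [List.forall_mem_cons] at hl
    simp only [cfNumDen]
    nlinarith [ih hl.2]

lemma cfVal_eq_ratio {l : List ℕ} (hl : ∀ a ∈ l, 1 ≤ a) : cfVal l = ratio (cfNumDen l) := by
  induction l with
  | nil => simp [cfVal, ratio, cfNumDen]
  | cons a t ih =>
    simp only [List.forall_mem_cons] at hl
    have hd : (0 : ℝ) < (cfNumDen t).2 := by exact_mod_cast cfNumDen_snd_pos hl.2
    rw [cfVal, ih hl.2, ratio, ratio, cfNumDen]
    push_cast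
    field_simp

lemma cfVal_append_one (w : List ℕ) (a : ℕ) :
    cfVal (w ++ [a] ++ [1]) = cfVal (w ++ [a + 1]) := by
  induction w with
  | nil => norm_num [cfVal]
  | cons b w ih => simp only [List.cons_append, cfVal] at ih ⊢; rw [ih]

def IsConvergentPair (m : ℕ) (p q : ℕ × ℕ) : Prop :=
  ∃ w a, (∀ x ∈ w, 1 ≤ x) ∧ 1 ≤ a ∧ w.sum + a = m + 1 ∧
    p = cfNumDen w ∧ q = cfNumDen (w ++ [a])

lemma IsConvergentPair.mediant {m : ℕ} {p q : ℕ × ℕ} (h : IsConvergentPair m p q) :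
    IsConvergentPair (m + 1) p (p + q) ∧ IsConvergentPair (m + 1) q (p + q) := by
  obtain ⟨w, a, hw, ha, hsum, rfl, rfl⟩ := h
  refine ⟨⟨w, a + 1, hw, by omega, by omega, rfl, (cfNumDen_append_succ w a).symm⟩,
    ⟨w ++ [a], 1, ?_, le_rfl, ?_, rfl, ?_⟩⟩
  · exact List.forall_mem_append.2 ⟨hw, by simpa using ha⟩
  · simp only [List.sum_append, List.sum_singleton]; omega
  · rw [cfNumDen_append_one, cfNumDen_append_succ]

lemma sbPair_isConvergentPair : ∀ m k, 1 ≤ k → k ≤ 2 ^ m →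
    IsConvergentPair m (sbPair m k) (sbPair m (k + 1)) ∨
      IsConvergentPair m (sbPair m (k + 1)) (sbPair m k) := by
  refine sbPair_consecutive_induction (fun m p q => IsConvergentPair m p q ∨ IsConvergentPair m q p)
    (Or.inl ⟨[], 1, by simp, le_rfl, rfl, rfl, rfl⟩) fun m p q h => ?_
  rcases h with h | h
  · exact ⟨Or.inl h.mediant.1, Or.inr h.mediant.2⟩
  · rw [add_comm p q]
    exact ⟨Or.inl h.mediant.2, Or.inr h.mediant.1⟩

def cfSet (s : ℕ) : Set ℝ :=
  {x | ∃ l : List ℕ, (∀ a ∈ l, 1 ≤ a) ∧ l.sum = s ∧ 2 ≤ l.getLastD 0 ∧ x = cfVal l}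

lemma cfSet_subset_range (s : ℕ) :
    cfSet (s + 2) ⊆
      Set.range fun c : Composition (s + 1) => cfVal (c.blocks.modifyLast (· + 1)) := by
  rintro x ⟨l, hpos, hsum, hlast, rfl⟩
  rcases l.eq_nil_or_concat' with rfl | ⟨t, b, rfl⟩
  · simp at hlast
  simp only [List.getLastD_concat] at hlast
  simp only [List.forall_mem_append, List.sum_append, List.sum_singleton] at hpos hsum
  refine ⟨⟨t ++ [b - 1], fun hi => ?_, ?_⟩, ?_⟩
  · simp only [List.mem_append, List.mem_singleton] at hi
    rcases hi with hi | rfl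
    · exact hpos.1 _ hi
    · omega
  · simp only [List.sum_append, List.sum_singleton]; omega
  · simp only [List.modifyLast_concat]
    congr
    omega

lemma cfSet_finite (s : ℕ) : (cfSet (s + 2)).Finite :=
  (Set.finite_range _).subset (cfSet_subset_range s)

lemma cfSet_ncard_le (s : ℕ) : (cfSet (s + 2)).ncard ≤ 2 ^ s :=
  calc (cfSet (s + 2)).ncard
      ≤ (Set.range fun c : Composition (s + 1) => cfVal (c.blocks.modifyLast (· + 1))).ncard :=
        Set.ncard_le_ncard (cfSet_subset_range s) (Set.finite_range _)
    _ ≤ Nat.card (Composition (s + 1)) := by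
        rw [← Set.image_univ, ← Set.ncard_univ]
        exact Set.ncard_image_le Set.finite_univ
    _ = 2 ^ s := by simp [composition_card]

def cfUpTo : ℕ → Set ℝ
  | 0 => {0, 1}
  | m + 1 => cfUpTo m ∪ cfSet (m + 2)

lemma cfUpTo_mono : Monotone cfUpTo :=
  monotone_nat_of_le_succ fun _ => Set.subset_union_left

lemma cfUpTo_finite (m : ℕ) : (cfUpTo m).Finite := by
  induction m with
  | zero => exact (Set.finite_singleton 1).insert 0
  | succ m ih => exact ih.union (cfSet_finite m)

lemma cfUpTo_ncard_le (m : ℕ) : (cfUpTo m).ncard ≤ 2 ^ m + 1 := by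
  induction m with
  | zero => exact (Set.ncard_insert_le _ _).trans (by simp)
  | succ m ih =>
    calc (cfUpTo (m + 1)).ncard ≤ (cfUpTo m).ncard + (cfSet (m + 2)).ncard :=
          Set.ncard_union_le _ _
      _ ≤ 2 ^ (m + 1) + 1 := by have := cfSet_ncard_le m; rw [pow_succ]; omega

lemma cfSet_subset_cfUpTo {s m : ℕ} (h2 : 2 ≤ s) (hm : s ≤ m + 1) : cfSet s ⊆ cfUpTo m := by
  obtain ⟨r, rfl⟩ := Nat.exists_eq_add_of_le' h2
  exact fun x hx => cfUpTo_mono (show r + 1 ≤ m by omega) (Or.inr hx)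

lemma cfVal_mem_cfUpTo {m : ℕ} {l : List ℕ} (hl : ∀ a ∈ l, 1 ≤ a) (hsum : l.sum ≤ m + 1) :
    cfVal l ∈ cfUpTo m := by
  have hmem : ∀ t b, (∀ a ∈ t, 1 ≤ a) → 2 ≤ b → t.sum + b ≤ m + 1 →
      cfVal (t ++ [b]) ∈ cfUpTo m := fun t b ht hb htb =>
    cfSet_subset_cfUpTo (by omega) htb
      ⟨t ++ [b], List.forall_mem_append.2 ⟨ht, by simpa using hb.trans' one_le_two⟩, by simp,
        by simpa using hb, rfl⟩
  rcases l.eq_nil_or_concat' with rfl | ⟨t, b, rfl⟩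
  · exact cfUpTo_mono (Nat.zero_le m) (by simp [cfUpTo, cfVal])
  simp only [List.forall_mem_append, List.forall_mem_singleton, List.sum_append,
    List.sum_singleton] at hl hsum
  by_cases hb : 2 ≤ b
  · exact hmem t b hl.1 hb hsum
  obtain rfl : b = 1 := by omega
  rcases t.eq_nil_or_concat' with rfl | ⟨t, c, rfl⟩
  · exact cfUpTo_mono (Nat.zero_le m) (by norm_num [cfUpTo, cfVal])
  simp only [List.forall_mem_append, List.forall_mem_singleton, List.sum_append,
    List.sum_singleton] at hl hsum
  rw [cfVal_append_one]
  exact hmem t (c + 1) hl.1.1 (by omega) (by omega)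

lemma sbSeq_subset_cfUpTo (m : ℕ) : sbSeq m ⊆ cfUpTo m := by
  have hmem : ∀ {p q}, IsConvergentPair m p q → ratio p ∈ cfUpTo m ∧ ratio q ∈ cfUpTo m := by
    rintro _ _ ⟨w, a, hw, ha, hsum, rfl, rfl⟩
    have hwa : ∀ x ∈ w ++ [a], 1 ≤ x := List.forall_mem_append.2 ⟨hw, by simpa using ha⟩
    rw [← cfVal_eq_ratio hw, ← cfVal_eq_ratio hwa]
    refine ⟨cfVal_mem_cfUpTo hw (by omega), cfVal_mem_cfUpTo hwa ?_⟩
    rw [List.sum_append, List.sum_singleton]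
    omega
  have hpair : ∀ k, 1 ≤ k → k ≤ 2 ^ m →
      ratio (sbPair m k) ∈ cfUpTo m ∧ ratio (sbPair m (k + 1)) ∈ cfUpTo m := fun k hk1 hk2 => by
    rcases sbPair_isConvergentPair m k hk1 hk2 with h | h
    exacts [hmem h, (hmem h).symm]
  rw [sbSeq_eq_image]
  rintro _ ⟨k, ⟨hk1, hk2⟩, rfl⟩
  rcases Nat.lt_or_ge k (2 ^ m + 1) with hk | hk
  · exact (hpair k hk1 (by omega)).1
  · obtain rfl : k = 2 ^ m + 1 := by omega
    exact (hpair (2 ^ m) Nat.one_le_two_pow le_rfl).2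

lemma sbSeq_eq_cfUpTo (m : ℕ) : sbSeq m = cfUpTo m :=
  Set.eq_of_subset_of_ncard_le (sbSeq_subset_cfUpTo m)
    ((cfUpTo_ncard_le m).trans (sbSeq_ncard m).ge) (cfUpTo_finite m)

lemma sbSeq_succ (m : ℕ) : sbSeq (m + 1) = sbSeq m ∪ cfSet (m + 2) := by
  rw [sbSeq_eq_cfUpTo, sbSeq_eq_cfUpTo, cfUpTo]

end SternBrocot

open SternBrocot in
/-- For `n ≥ 2`, the set `𝔗_{n-1} \ 𝔗_{n-2}` equals the set of finite continued
fractions `[a_1, ..., a_k]` over tuples of positive integers with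
`a_1 + ... + a_k = n` and `a_k ≥ 2`, and it has cardinality `2^{n-2}`. -/
theorem sternBrocot_diff_eq_continued_fractions (n : ℕ) (hn : 2 ≤ n) :
    sbSeq (n - 1) \ sbSeq (n - 2) =
      {x | ∃ l : List ℕ, (∀ a ∈ l, 1 ≤ a) ∧ l.sum = n ∧ 2 ≤ l.getLastD 0 ∧
        x = cfVal l} ∧
    Nat.card (sbSeq (n - 1) \ sbSeq (n - 2) : Set ℝ) = 2 ^ (n - 2) := by
  obtain ⟨k, rfl⟩ := Nat.exists_eq_add_of_le' hn
  rw [show k + 2 - 1 = k + 1 by omega, Nat.add_sub_cancel]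
  have hdiff : sbSeq (k + 1) \ sbSeq k = cfSet (k + 2) \ sbSeq k := by
    rw [sbSeq_succ, Set.union_sdiff_left]
  have hcard : (sbSeq (k + 1) \ sbSeq k).ncard = 2 ^ k := by
    have hsub : sbSeq k ⊆ sbSeq (k + 1) := by rw [sbSeq_succ]; exact Set.subset_union_left
    rw [Set.ncard_sdiff hsub (sbSeq_finite k), sbSeq_ncard, sbSeq_ncard, pow_succ]
    omega
  have hdisj : cfSet (k + 2) \ sbSeq k = cfSet (k + 2) :=
    Set.eq_of_subset_of_ncard_le Set.sdiff_subset
      (by rw [← hdiff, hcard]; exact cfSet_ncard_le k) (cfSet_finite k)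
  exact ⟨hdiff.trans hdisj, by rw [Nat.card_coe_set_eq, hcard]⟩
end

section
/- For every n ≥ 1, the smallest Stern–Brocot interval of order n has length 1/(f_{n+1} f_{n+2}), where f_k denotes the k-th Fibonacci number; i.e., min over k=1,...,2^n of |T_{n,k}| = 1/(f_{n+1} f_{n+2}). -/
/-- The length of the Stern–Brocot interval `T_{n,k}`. -/
noncomputable def sbLen (n k : ℕ) : ℝ :=
  (sbS n (k + 1) : ℝ) / sbT n (k + 1) - (sbS n k : ℝ) / sbT n k

/-!
Passing from order `n` to order `n + 1` replaces the pair of consecutive denominators `(a, b)`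
of an interval by `(a, a + b)` or `(a + b, b)`. Hence the smaller entry of the pair stays below
`f_{n+1}` and the larger below `f_{n+2}`, with equality along the path that always keeps the
larger entry. The determinant identity `s_{k+1} t_k - s_k t_{k+1} = 1`, preserved by the same
step, gives `|T_{n,k}| = 1 / (t_k t_{k+1})`.
-/

section Recursion

variable (n j : ℕ)

@[simp]
lemma sbS_succ_two_mul : sbS (n + 1) (2 * j) = sbS n j + sbS n (j + 1) := by
  rw [sbS, if_neg (by omega), Nat.mul_div_cancel_left j two_pos]

@[simp]
lemma sbS_succ_two_mul_add_one : sbS (n + 1) (2 * j + 1) = sbS n (j + 1) := by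
  rw [sbS, if_pos (by omega)]
  congr 1
  omega

@[simp]
lemma sbT_succ_two_mul : sbT (n + 1) (2 * j) = sbT n j + sbT n (j + 1) := by
  rw [sbT, if_neg (by omega), Nat.mul_div_cancel_left j two_pos]

@[simp]
lemma sbT_succ_two_mul_add_one : sbT (n + 1) (2 * j + 1) = sbT n (j + 1) := by
  rw [sbT, if_pos (by omega)]
  congr 1
  omega

end Recursion

lemma sbT_pos (n k : ℕ) : 0 < sbT n k := by
  induction n generalizing k with
  | zero => simp [sbT]
  | succ n ih =>
    obtain ⟨j, rfl | rfl⟩ := Nat.even_or_odd' k <;> simp [ih]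

lemma sbS_mul_sbT_eq (n k : ℕ) (hk₁ : 1 ≤ k) (hk₂ : k ≤ 2 ^ n) :
    sbS n (k + 1) * sbT n k = sbS n k * sbT n (k + 1) + 1 := by
  induction n generalizing k with
  | zero =>
    obtain rfl : k = 1 := by omega
    simp [sbS, sbT]
  | succ n ih =>
    obtain ⟨j, rfl | rfl⟩ := Nat.even_or_odd' k
    · have := ih j (by omega) (by rw [pow_succ] at hk₂; omega)
      simp only [sbS_succ_two_mul, sbT_succ_two_mul, sbS_succ_two_mul_add_one,
        sbT_succ_two_mul_add_one]
      linear_combination this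
    · have := ih (j + 1) (by omega) (by rw [pow_succ] at hk₂; omega)
      rw [show 2 * j + 1 + 1 = 2 * (j + 1) by ring]
      simp only [sbS_succ_two_mul, sbT_succ_two_mul, sbS_succ_two_mul_add_one,
        sbT_succ_two_mul_add_one]
      linear_combination this

lemma sbLen_eq_one_div (n k : ℕ) (hk₁ : 1 ≤ k) (hk₂ : k ≤ 2 ^ n) :
    sbLen n k = 1 / ((sbT n k : ℝ) * sbT n (k + 1)) := by
  have hdet : (sbS n (k + 1) : ℝ) * sbT n k = sbS n k * sbT n (k + 1) + 1 := by
    exact_mod_cast sbS_mul_sbT_eq n k hk₁ hk₂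
  have := sbT_pos n k
  have := sbT_pos n (k + 1)
  rw [sbLen, div_sub_div _ _ (by positivity) (by positivity),
    mul_comm (sbT n (k + 1) : ℝ) (sbT n k)]
  congr 1
  linear_combination hdet

lemma min_sbT_le_fib_and_max_sbT_le_fib (n k : ℕ) :
    min (sbT n k) (sbT n (k + 1)) ≤ Nat.fib (n + 1) ∧
      max (sbT n k) (sbT n (k + 1)) ≤ Nat.fib (n + 2) := by
  induction n generalizing k with
  | zero => simp [sbT]
  | succ n ih =>
    obtain ⟨j, rfl | rfl⟩ := Nat.even_or_odd' k
    · have := ih j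
      simp only [sbT_succ_two_mul, sbT_succ_two_mul_add_one, Nat.fib_add_two] at this ⊢
      omega
    · have := ih (j + 1)
      rw [show 2 * j + 1 + 1 = 2 * (j + 1) by ring]
      simp only [sbT_succ_two_mul, sbT_succ_two_mul_add_one, Nat.fib_add_two] at this ⊢
      omega

lemma sbT_mul_sbT_succ_le (n k : ℕ) :
    sbT n k * sbT n (k + 1) ≤ Nat.fib (n + 1) * Nat.fib (n + 2) := by
  obtain ⟨hmin, hmax⟩ := min_sbT_le_fib_and_max_sbT_le_fib n k
  rw [← min_mul_max]
  exact Nat.mul_le_mul hmin hmax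

lemma exists_min_max_sbT_eq_fib (n : ℕ) : ∃ k, 1 ≤ k ∧ k ≤ 2 ^ n ∧
    min (sbT n k) (sbT n (k + 1)) = Nat.fib (n + 1) ∧
      max (sbT n k) (sbT n (k + 1)) = Nat.fib (n + 2) := by
  induction n with
  | zero => exact ⟨1, le_rfl, le_rfl, by simp [sbT]⟩
  | succ n ih =>
    obtain ⟨k, hk₁, hk₂, hmin, hmax⟩ := ih
    have hpow : 2 ^ (n + 1) = 2 * 2 ^ n := by ring
    obtain ⟨j, rfl⟩ : ∃ j, k = j + 1 := ⟨k - 1, by omega⟩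
    simp only [Nat.fib_add_two] at hmin hmax ⊢
    by_cases h : sbT n (j + 1) ≤ sbT n (j + 1 + 1)
    · refine ⟨2 * (j + 1), by omega, by omega, ?_⟩
      simp only [sbT_succ_two_mul, sbT_succ_two_mul_add_one]
      omega
    · refine ⟨2 * j + 1, by omega, by omega, ?_⟩
      rw [show 2 * j + 1 + 1 = 2 * (j + 1) by ring]
      simp only [sbT_succ_two_mul, sbT_succ_two_mul_add_one]
      omega

theorem sternBrocot_min_length_general (n : ℕ) :
    (∀ k ∈ Finset.Icc 1 (2 ^ n),
      1 / ((Nat.fib (n + 1) : ℝ) * Nat.fib (n + 2)) ≤ sbLen n k) ∧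
    (∃ k ∈ Finset.Icc 1 (2 ^ n),
      sbLen n k = 1 / ((Nat.fib (n + 1) : ℝ) * Nat.fib (n + 2))) := by
  constructor
  · intro k hk
    rw [Finset.mem_Icc] at hk
    rw [sbLen_eq_one_div n k hk.1 hk.2]
    have := sbT_pos n k
    have := sbT_pos n (k + 1)
    exact one_div_le_one_div_of_le (by positivity) (by exact_mod_cast sbT_mul_sbT_succ_le n k)
  · obtain ⟨k, hk₁, hk₂, hmin, hmax⟩ := exists_min_max_sbT_eq_fib n
    refine ⟨k, Finset.mem_Icc.mpr ⟨hk₁, hk₂⟩, ?_⟩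
    rw [sbLen_eq_one_div n k hk₁ hk₂, ← hmin, ← hmax, Nat.cast_min, Nat.cast_max,
      min_mul_max]

/-- For `n ≥ 1`, the smallest Stern–Brocot interval of order `n` has length
`1/(fib (n+1) * fib (n+2))`. -/
theorem sternBrocot_min_length (n : ℕ) (hn : 1 ≤ n) :
    (∀ k ∈ Finset.Icc 1 (2 ^ n),
      1 / ((Nat.fib (n + 1) : ℝ) * Nat.fib (n + 2)) ≤ sbLen n k) ∧
    (∃ k ∈ Finset.Icc 1 (2 ^ n),
      sbLen n k = 1 / ((Nat.fib (n + 1) : ℝ) * Nat.fib (n + 2))) :=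
  sternBrocot_min_length_general n
end

section
/- For θ > 1/2, the Diophantine pressure satisfies 0 ≤ log ζ(θ) − P_D(θ) ≤ 2θ log 2, where ζ(θ) = ∑_{n≥1} n^{-2θ}; in particular P_D(θ) → ∞ as θ ↘ 1/2. -/
open Filter

/-- The continued fraction denominator `q_k([a_1, ..., a_k])` (the continuant). -/
def cfDen : List ℕ → ℕ
  | [] => 1
  | [a] => a
  | a :: b :: t => a * cfDen (b :: t) + cfDen t

/-- The Diophantine pressure (with `limsup`). -/
noncomputable def diophantinePressure (θ : ℝ) : ℝ :=
  limsup (fun k : ℕ =>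
    Real.log (∑' l : {l : List ℕ // l.length = k ∧ ∀ a ∈ l, 1 ≤ a},
      (cfDen l.1 : ℝ) ^ (-2 * θ)) / k) atTop

/-! For positive partial quotients `∏ aᵢ ≤ q_k(a) ≤ 2 ^ k ∏ aᵢ`, and the sum of `∏ aᵢ ^ (-2θ)` over
`ℕ_{≥1}^k` factorizes as `ζ(θ) ^ k`. Hence the `k`-th partition sum `∑ q_k ^ (-2θ)` lies between
`(2 ^ (-2θ) ζ(θ)) ^ k` and `ζ(θ) ^ k`, which pins `P_D(θ)` into `[log ζ(θ) - 2θ log 2, log ζ(θ)]`.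
Near `θ = 1/2` the partial sums of `ζ(θ)` approach those of the harmonic series, so `ζ(θ) → ∞`. -/

open Real Set Topology

lemma prod_le_cfDen : ∀ l : List ℕ, l.prod ≤ cfDen l
  | [] => le_rfl
  | [a] => by simp [cfDen]
  | a :: b :: t =>
    calc (a :: b :: t).prod = a * (b :: t).prod := List.prod_cons
      _ ≤ a * cfDen (b :: t) := Nat.mul_le_mul_left a (prod_le_cfDen (b :: t))
      _ ≤ cfDen (a :: b :: t) := Nat.le_add_right _ _

lemma cfDen_le_cfDen_cons {b : ℕ} (hb : 1 ≤ b) : ∀ t : List ℕ, cfDen t ≤ cfDen (b :: t)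
  | [] => hb
  | c :: t =>
    calc cfDen (c :: t) ≤ b * cfDen (c :: t) := Nat.le_mul_of_pos_left _ hb
      _ ≤ cfDen (b :: c :: t) := Nat.le_add_right _ _

lemma cfDen_le_two_pow_length_mul_prod :
    ∀ l : List ℕ, (∀ a ∈ l, 1 ≤ a) → cfDen l ≤ 2 ^ l.length * l.prod
  | [], _ => le_rfl
  | [a], _ => by simp only [cfDen, List.length_singleton, List.prod_singleton]; omega
  | a :: b :: t, h => by
    have ha : 1 ≤ a := h a (by simp)
    have hb : 1 ≤ b := h b (by simp)
    have ih := cfDen_le_two_pow_length_mul_prod (b :: t) fun x hx => h x (.tail _ hx)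
    calc cfDen (a :: b :: t) = a * cfDen (b :: t) + cfDen t := rfl
      _ ≤ 2 * a * cfDen (b :: t) := by nlinarith [cfDen_le_cfDen_cons hb t]
      _ ≤ 2 * a * (2 ^ (b :: t).length * (b :: t).prod) := by gcongr
      _ = 2 ^ (a :: b :: t).length * (a :: b :: t).prod := by
        simp only [List.length_cons, List.prod_cons, pow_succ]; ring

def posListEquiv (k : ℕ) : (Fin k → ℕ) ≃ {l : List ℕ // l.length = k ∧ ∀ a ∈ l, 1 ≤ a} where
  toFun f := ⟨List.ofFn (f · + 1), List.length_ofFn, by simp⟩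
  invFun l i := l.1[i.cast l.2.1.symm] - 1
  left_inv f := by ext i; simp
  right_inv := fun ⟨l, hlen, hpos⟩ => by
    ext1
    refine List.ext_getElem (by simp [hlen]) fun n _ h => ?_
    simpa using Nat.sub_add_cancel (hpos _ (List.getElem_mem h))

lemma hasSum_fin_pi_prod {β : Type*} {g : β → ℝ} (hg0 : 0 ≤ g) (hg : Summable g) (k : ℕ) :
    HasSum (fun f : Fin k → β => ∏ i, g (f i)) ((∑' b, g b) ^ k) := by
  induction k with
  | zero => simp
  | succ k ih =>
    set G := fun f : Fin k → β => ∏ i, g (f i)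
    have hG0 : 0 ≤ G := fun f => Finset.prod_nonneg fun i _ => hg0 (f i)
    have := HasSum.mul (f := g) (g := G) hg.hasSum ih (hg.mul_of_nonneg ih.summable hg0 hG0)
    rw [← (Fin.consEquiv fun _ => β).hasSum_iff, pow_succ']
    exact this.congr_fun fun p => by simp [G, Fin.prod_univ_succ]

lemma limsup_mem_Icc_of_eventually {α β : Type*} [ConditionallyCompleteLinearOrder β]
    {f : Filter α} [f.NeBot] {u : α → β} {a b : β} (h : ∀ᶠ x in f, u x ∈ Icc a b) :
    limsup u f ∈ Icc a b :=
  ⟨le_limsup_of_frequently_le (h.mono fun _ hx => hx.1).frequently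
      (isBoundedUnder_of_eventually_le (h.mono fun _ hx => hx.2)),
    limsup_le_of_le (isCoboundedUnder_le_of_eventually_le f (h.mono fun _ hx => hx.1))
      (h.mono fun _ hx => hx.2)⟩

section

variable {r : ℝ}

noncomputable def cfDenRpowSum (r : ℝ) (k : ℕ) : ℝ :=
  ∑' l : {l : List ℕ // l.length = k ∧ ∀ a ∈ l, 1 ≤ a}, (cfDen l.1 : ℝ) ^ r

lemma summable_nat_add_one_rpow (hr : r < -1) : Summable fun n : ℕ => ((n : ℝ) + 1) ^ r := by
  simpa using (summable_nat_add_iff 1).mpr (Real.summable_nat_rpow.mpr hr)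

lemma rpow_cfDen_ofFn_mem_Icc (hr : r ≤ 0) {k : ℕ} (f : Fin k → ℕ) :
    (cfDen (List.ofFn (f · + 1)) : ℝ) ^ r ∈
      Icc ((2 ^ r) ^ k * ∏ i, ((f i : ℝ) + 1) ^ r) (∏ i, ((f i : ℝ) + 1) ^ r) := by
  set l := List.ofFn (f · + 1)
  have hl : ∀ a ∈ l, 1 ≤ a := by simp [l]
  have hprod_pos : 0 < l.prod := by simp [l, List.prod_ofFn]
  have hprod : (l.prod : ℝ) ^ r = ∏ i, ((f i : ℝ) + 1) ^ r := by
    rw [Real.finsetProd_rpow _ _ fun i _ => by positivity]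
    simp [l, List.prod_ofFn]
  constructor
  · calc (2 ^ r) ^ k * ∏ i, ((f i : ℝ) + 1) ^ r = ((2 ^ l.length * l.prod : ℕ) : ℝ) ^ r := by
          rw [Nat.cast_mul, Nat.cast_pow, Real.mul_rpow (by positivity) (by positivity), hprod,
            Nat.cast_ofNat, ← Real.rpow_pow_comm (by norm_num), List.length_ofFn]
      _ ≤ (cfDen l : ℝ) ^ r := by
          refine Real.rpow_le_rpow_of_nonpos ?_ ?_ hr
          · exact_mod_cast hprod_pos.trans_le (prod_le_cfDen l)
          · exact_mod_cast cfDen_le_two_pow_length_mul_prod l hl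
  · rw [← hprod]
    exact Real.rpow_le_rpow_of_nonpos (by exact_mod_cast hprod_pos)
      (by exact_mod_cast prod_le_cfDen l) hr

lemma cfDenRpowSum_mem_Icc (hr : r < -1) (k : ℕ) :
    cfDenRpowSum r k ∈
      Icc ((2 ^ r * ∑' n : ℕ, ((n : ℝ) + 1) ^ r) ^ k) ((∑' n : ℕ, ((n : ℝ) + 1) ^ r) ^ k) := by
  have hP := hasSum_fin_pi_prod (fun n => by positivity) (summable_nat_add_one_rpow hr) k
  have hbound := rpow_cfDen_ofFn_mem_Icc (by linarith) (k := k)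
  have hF : Summable fun f : Fin k → ℕ => (cfDen (List.ofFn (f · + 1)) : ℝ) ^ r :=
    hP.summable.of_nonneg_of_le (fun f => by positivity) fun f => (hbound f).2
  rw [cfDenRpowSum, ← (posListEquiv k).tsum_eq, mul_pow, ← hP.tsum_eq, ← tsum_mul_left]
  exact ⟨hP.summable.mul_left _ |>.tsum_le_tsum (fun f => (hbound f).1) hF,
    hF.tsum_le_tsum (fun f => (hbound f).2) hP.summable⟩


lemma log_cfDenRpowSum_div_mem_Icc (hr : r < -1) {k : ℕ} (hk : k ≠ 0) :
    log (cfDenRpowSum r k) / k ∈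
      Icc (log (∑' n : ℕ, ((n : ℝ) + 1) ^ r) + r * log 2) (log (∑' n : ℕ, ((n : ℝ) + 1) ^ r)) := by
  set Z := ∑' n : ℕ, ((n : ℝ) + 1) ^ r
  have hZ : 0 < Z :=
    (summable_nat_add_one_rpow hr).tsum_pos (fun n => by positivity) 0 (by positivity)
  have hk_pos : (0 : ℝ) < k := by positivity
  obtain ⟨hlow, hupp⟩ := cfDenRpowSum_mem_Icc hr k
  have hlow_pos : 0 < (2 ^ r * Z) ^ k := by positivity
  have hlog_low := log_le_log hlow_pos hlow
  have hlog_upp := log_le_log (hlow_pos.trans_le hlow) hupp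
  rw [log_pow, log_mul (by positivity) hZ.ne', log_rpow two_pos] at hlog_low
  rw [log_pow] at hlog_upp
  constructor
  · rw [le_div_iff₀ hk_pos]; linarith
  · rw [div_le_iff₀ hk_pos]; linarith

lemma limsup_log_cfDenRpowSum_div_mem_Icc (hr : r < -1) :
    limsup (fun k : ℕ => log (cfDenRpowSum r k) / k) atTop ∈
      Icc (log (∑' n : ℕ, ((n : ℝ) + 1) ^ r) + r * log 2) (log (∑' n : ℕ, ((n : ℝ) + 1) ^ r)) :=
  limsup_mem_Icc_of_eventually <|
    (eventually_ne_atTop 0).mono fun _ hk => log_cfDenRpowSum_div_mem_Icc hr hk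

end

lemma tendsto_tsum_nat_add_one_rpow_nhdsLT :
    Tendsto (fun r : ℝ => ∑' n : ℕ, ((n : ℝ) + 1) ^ r) (𝓝[<] (-1)) atTop := by
  refine tendsto_atTop.2 fun M => ?_
  obtain ⟨N, hN⟩ := (tendsto_atTop.1 tendsto_sum_range_one_div_nat_succ_atTop (M + 1)).exists
  have hcont : Continuous fun r : ℝ => ∑ n ∈ Finset.range N, ((n : ℝ) + 1) ^ r := by
    fun_prop (disch := positivity)
  have hM : M < ∑ n ∈ Finset.range N, ((n : ℝ) + 1) ^ (-1 : ℝ) := by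
    simp only [rpow_neg_one, ← one_div]; linarith
  filter_upwards [nhdsWithin_le_nhds (hcont.continuousAt.eventually (eventually_gt_nhds hM)),
    self_mem_nhdsWithin] with r hr hr_lt
  exact hr.le.trans <|
    (summable_nat_add_one_rpow hr_lt).sum_le_tsum _ fun n _ => by positivity

/-- For `θ > 1/2`, `0 ≤ log ζ(θ) - P_D(θ) ≤ 2θ log 2`, where
`ζ(θ) = ∑_{n ≥ 1} n^{-2θ}`; in particular `P_D(θ) → ∞` as `θ ↘ 1/2`. -/
theorem diophantine_pressure_zeta_bounds :
    (∀ θ : ℝ, 1 / 2 < θ →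
      0 ≤ Real.log (∑' n : ℕ, ((n : ℝ) + 1) ^ (-2 * θ)) - diophantinePressure θ ∧
      Real.log (∑' n : ℕ, ((n : ℝ) + 1) ^ (-2 * θ)) - diophantinePressure θ ≤
        2 * θ * Real.log 2) ∧
    Tendsto diophantinePressure (nhdsWithin (1 / 2) (Set.Ioi (1 / 2))) atTop := by
  have hP (θ : ℝ) (hθ : 1 / 2 < θ) : diophantinePressure θ ∈
      Icc (log (∑' n : ℕ, ((n : ℝ) + 1) ^ (-2 * θ)) + -2 * θ * log 2)
        (log (∑' n : ℕ, ((n : ℝ) + 1) ^ (-2 * θ))) :=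
    limsup_log_cfDenRpowSum_div_mem_Icc (by linarith)
  refine ⟨fun θ hθ => ?_, ?_⟩
  · obtain ⟨hlow, hupp⟩ := hP θ hθ
    exact ⟨sub_nonneg.2 hupp, by linarith⟩
  · have hexp : Tendsto (fun θ : ℝ => -2 * θ) (𝓝[>] (1 / 2)) (𝓝[<] (-1)) :=
      tendsto_nhdsWithin_iff.2
        ⟨((continuous_const_mul (-2)).tendsto' _ _ (by norm_num)).mono_left nhdsWithin_le_nhds,
          eventually_nhdsWithin_of_forall fun θ (hθ : 1 / 2 < θ) => show -2 * θ < -1 by linarith⟩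
    have hlow : Tendsto (fun θ : ℝ => log (∑' n : ℕ, ((n : ℝ) + 1) ^ (-2 * θ)) + -2 * θ * log 2)
        (𝓝[>] (1 / 2)) atTop :=
      (tendsto_log_atTop.comp (tendsto_tsum_nat_add_one_rpow_nhdsLT.comp hexp)).atTop_add
        ((continuous_mul_const (log 2)).tendsto _ |>.comp (hexp.mono_right nhdsWithin_le_nhds))
    exact tendsto_atTop_mono' _ (eventually_nhdsWithin_of_forall fun θ hθ => (hP θ hθ).1) hlow
end
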